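/- Let S_ε denote the dilation operator (S_ε u)(x) = u(εx) on Schwartz functions. If N is a continuous operator on Schwartz space and there exist β > 0 and an operator N̄ such that S_{ε⁻¹} ∘ N ∘ S_ε = ε^(β+1) N̄ + o(ε^(β+1)) pointwise in the weak topology as ε → 0⁺, then N̄ satisfies the exact scaling law S_{ε⁻¹} ∘ N̄ ∘ S_ε = ε^(β+1) N̄ for all ε > 0. -/
import Mathlib


open Filter Topology

instance : T1Space (SchwartzMap ℝ ℝ) := by
  refine (schwartz_withSeminorms ℝ ℝ ℝ).T1_of_separating ?_
  intro f hf
  refine ⟨(0,0), ?_⟩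
  intro h0
  apply hf
  ext x
  have := SchwartzMap.norm_le_seminorm ℝ f x
  rw [show schwartzSeminormFamily ℝ ℝ ℝ (0,0) = SchwartzMap.seminorm ℝ 0 0 from rfl] at h0
  simp only [h0] at this
  simpa using norm_le_zero_iff.mp this

/-- If a continuous operator `N` on Schwartz space satisfies
`S_{ε⁻¹} ∘ N ∘ S_ε = ε^(β+1) N̄ + o(ε^(β+1))` pointwise as `ε → 0⁺`, where `S_ε`
is the dilation operator, then `N̄` satisfies the exact scaling law
`S_{ε⁻¹} ∘ N̄ ∘ S_ε = ε^(β+1) N̄` for all `ε > 0`. -/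
theorem stmt1 (β : ℝ) (hβ : 0 < β)
    (S : ℝ → SchwartzMap ℝ ℝ → SchwartzMap ℝ ℝ)
    (hSdil : ∀ ε : ℝ, 0 < ε → ∀ u : SchwartzMap ℝ ℝ, ∀ x : ℝ, (S ε u) x = u (ε * x))
    (hScont : ∀ ε : ℝ, 0 < ε → Continuous (S ε))
    (N Nbar : SchwartzMap ℝ ℝ → SchwartzMap ℝ ℝ)
    (hNcont : Continuous N)
    (h : ∀ u : SchwartzMap ℝ ℝ,
      Tendsto (fun ε : ℝ => (ε ^ (β + 1))⁻¹ • (S ε⁻¹ (N (S ε u)) - ε ^ (β + 1) • Nbar u))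
        (𝓝[>] (0:ℝ)) (𝓝 (0 : SchwartzMap ℝ ℝ))) :
    ∀ ε : ℝ, 0 < ε → ∀ u : SchwartzMap ℝ ℝ,
      S ε⁻¹ (Nbar (S ε u)) = ε ^ (β + 1) • Nbar u := by
  intro ε hε u
  -- S commutes with scalar multiplication
  have hS_smul : ∀ a : ℝ, 0 < a → ∀ (c : ℝ) (v : SchwartzMap ℝ ℝ),
      S a (c • v) = c • S a v := by
    intro a ha c v
    ext x
    rw [hSdil a ha]
    simp [hSdil a ha v]
  -- composition law
  have hS_comp : ∀ a b : ℝ, 0 < a → 0 < b → ∀ v : SchwartzMap ℝ ℝ,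
      S a (S b v) = S (b * a) v := by
    intro a b ha hb v
    ext x
    rw [hSdil a ha, hSdil b hb, hSdil (b * a) (mul_pos hb ha)]
    ring_nf
  -- key limit
  have key : ∀ v : SchwartzMap ℝ ℝ,
      Tendsto (fun δ : ℝ => (δ ^ (β + 1))⁻¹ • S δ⁻¹ (N (S δ v))) (𝓝[>] (0:ℝ))
        (𝓝 (Nbar v)) := by
    intro v
    have h2 := (h v).add (tendsto_const_nhds (x := Nbar v))
    rw [zero_add] at h2
    refine h2.congr' ?_
    filter_upwards [self_mem_nhdsWithin] with δ hδ
    have hδ' : (0:ℝ) < δ := hδ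
    have hδpow : (δ : ℝ) ^ (β + 1) ≠ 0 :=
      ne_of_gt (Real.rpow_pos_of_pos hδ' _)
    rw [smul_sub, smul_smul, inv_mul_cancel₀ hδpow, one_smul, sub_add_cancel]
  have hεinv : (0:ℝ) < ε⁻¹ := inv_pos.mpr hε
  have lim1 : Tendsto
      (fun δ : ℝ => S ε⁻¹ ((δ ^ (β + 1))⁻¹ • S δ⁻¹ (N (S δ (S ε u))))) (𝓝[>] (0:ℝ))
      (𝓝 (S ε⁻¹ (Nbar (S ε u)))) :=
    ((hScont ε⁻¹ hεinv).tendsto _).comp (key (S ε u))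
  -- change of variables
  have hmap : Tendsto (fun δ : ℝ => ε * δ) (𝓝[>] (0:ℝ)) (𝓝[>] (0:ℝ)) := by
    apply tendsto_nhdsWithin_of_tendsto_nhds_of_eventually_within
    · have h1 : Tendsto (fun δ : ℝ => ε * δ) (𝓝 0) (𝓝 (ε * 0)) :=
        (continuous_const.mul continuous_id).tendsto 0
      rw [mul_zero] at h1
      exact h1.mono_left nhdsWithin_le_nhds
    · filter_upwards [self_mem_nhdsWithin] with δ hδ
      exact mul_pos hε hδ
  have lim2 : Tendsto
      (fun δ : ℝ => S ε⁻¹ ((δ ^ (β + 1))⁻¹ • S δ⁻¹ (N (S δ (S ε u))))) (𝓝[>] (0:ℝ))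
      (𝓝 (ε ^ (β + 1) • Nbar u)) := by
    have base := (((key u).comp hmap).const_smul (ε ^ (β + 1)))
    refine base.congr' ?_
    filter_upwards [self_mem_nhdsWithin] with δ hδ
    have hδ' : (0:ℝ) < δ := hδ
    have hεδ : (0:ℝ) < ε * δ := mul_pos hε hδ'
    have hδinv : (0:ℝ) < δ⁻¹ := inv_pos.mpr hδ'
    show ε ^ (β + 1) • (((ε * δ) ^ (β + 1))⁻¹ • S (ε * δ)⁻¹ (N (S (ε * δ) u)))
        = S ε⁻¹ ((δ ^ (β + 1))⁻¹ • S δ⁻¹ (N (S δ (S ε u))))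
    rw [hS_smul ε⁻¹ hεinv, hS_comp δ ε hδ' hε, hS_comp ε⁻¹ δ⁻¹ hεinv hδinv,
      ← mul_inv, smul_smul, mul_comm δ ε]
    congr 1
    rw [Real.mul_rpow hε.le hδ'.le, mul_inv, ← mul_assoc,
      mul_inv_cancel₀ (ne_of_gt (Real.rpow_pos_of_pos hε _)), one_mul]
  exact tendsto_nhds_unique lim1 lim2
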